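/- arXiv:2001.00687 — 2 statements merged into one kernel-verified Lean document; each statement's English description precedes it below -/
import Mathlib

section
/- Let α ∈ [0, π/2), let A ∈ M_n(ℂ) be a sector matrix of angle α with 0 < m·I_n ≤ Re A ≤ M·I_n for some 0 < m ≤ M, and set h = M/m. Then for every normalized positive linear map Φ : M_n(ℂ) → M_l(ℂ), one has Φ((Re A)^{-1}) ≤ sec²(α)·K(h)^{1/2}·Φ(Re(A^{-1})) in the Loewner order. -/
open Matrix
open scoped ComplexOrder

/-- The real (Hermitian) part of a complex matrix: `Re A = (A + Aᴴ)/2`. -/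
noncomputable def matRe {n : ℕ} (A : Matrix (Fin n) (Fin n) ℂ) : Matrix (Fin n) (Fin n) ℂ :=
  (2⁻¹ : ℂ) • (A + Aᴴ)

/-- `A` is a sector matrix of angle `α`: its numerical range is contained in
`S_α = {z : Re z > 0, |Im z| ≤ tan α · Re z}`. -/
def InSector {n : ℕ} (α : ℝ) (A : Matrix (Fin n) (Fin n) ℂ) : Prop :=
  ∀ x : Fin n → ℂ, star x ⬝ᵥ x = 1 →
    0 < (star x ⬝ᵥ A *ᵥ x).re ∧
      |(star x ⬝ᵥ A *ᵥ x).im| ≤ Real.tan α * (star x ⬝ᵥ A *ᵥ x).re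

/-- The Kantorovich constant `K(x) = (x+1)²/(4x)`. -/
noncomputable def kant (x : ℝ) : ℝ := (x + 1) ^ 2 / (4 * x)

/-!
Write `A = R + iT` with `R = Re A`, `T = Im A` and `t = tan α`. The sector condition says
exactly `-tR ≤ T ≤ tR`, and this forces `T R⁻¹ T ≤ t² R`: for `t > 0`, `t² R - T R⁻¹ T` is
`2t` times the parallel sum `P (P + Q)⁻¹ Q` of the positive matrices `P = tR - T`,
`Q = tR + T`. Hence `A* R⁻¹ A = R + T R⁻¹ T ≤ sec² α · R`, and the congruence by `A⁻¹`, which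
turns `R` into `Re (A⁻¹)`, gives `(Re A)⁻¹ ≤ sec² α · Re (A⁻¹)`. Apply `Φ` and use `K(h) ≥ 1`.
-/

open scoped MatrixOrder ComplexStarModule

namespace Matrix

section Loewner

variable {𝕜 ι : Type*} [RCLike 𝕜] [Fintype ι] [DecidableEq ι]

theorem PosSemidef.mul_inv_add_mul {P Q : Matrix ι ι 𝕜} (hP : P.PosSemidef) (hQ : Q.PosSemidef)
    (hPQ : IsUnit (P + Q).det) : (P * (P + Q)⁻¹ * Q).PosSemidef := by
  set S := (P + Q)⁻¹
  have hSH : Sᴴ = S := by rw [conjTranspose_nonsing_inv, (hP.add hQ).isHermitian.eq]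
  have hright : (P + Q) * S = 1 := mul_nonsing_inv _ hPQ
  have hleft : S * (P + Q) = 1 := nonsing_inv_mul _ hPQ
  have hcomm : P * S * Q = Q * S * P := by
    calc P * S * Q = (P + Q) * S * Q - Q * S * Q := by noncomm_ring
      _ = Q * (S * (P + Q)) - Q * S * Q := by rw [hright, hleft, one_mul, mul_one]
      _ = Q * S * P := by noncomm_ring
  have hsum : P * S * Q = (S * P)ᴴ * Q * (S * P) + (S * Q)ᴴ * P * (S * Q) := by
    rw [conjTranspose_mul, conjTranspose_mul, hSH, hP.isHermitian.eq, hQ.isHermitian.eq]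
    calc P * S * Q = P * S * Q * (S * (P + Q)) := by rw [hleft, mul_one]
      _ = P * S * Q * S * P + P * S * Q * S * Q := by noncomm_ring
      _ = P * S * Q * (S * P) + Q * S * P * (S * Q) := by rw [← hcomm]; noncomm_ring
  rw [hsum]
  exact (hQ.conjTranspose_mul_mul_same _).add (hP.conjTranspose_mul_mul_same _)

theorem mul_inv_mul_le_sq_smul {R T : Matrix ι ι 𝕜} (hR : R.PosDef) {t : ℝ} (ht : 0 ≤ t)
    (hlo : -(t • R) ≤ T) (hhi : T ≤ t • R) : T * R⁻¹ * T ≤ t ^ 2 • R := by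
  rcases ht.eq_or_lt with rfl | ht
  · have hT : T = 0 := le_antisymm (by simpa using hhi) (by simpa using hlo)
    simp [hT]
  have hRdet : IsUnit R.det := (isUnit_iff_isUnit_det R).mp hR.isUnit
  have hexp : (t • R - T) * R⁻¹ * (t • R + T) = t ^ 2 • R - T * R⁻¹ * T := by
    simp only [sub_mul, mul_add, smul_mul_assoc, mul_smul_comm, Matrix.mul_assoc,
      mul_nonsing_inv_cancel_left _ _ hRdet, nonsing_inv_mul _ hRdet, Matrix.mul_one]
    module
  have hP : ((2 * t)⁻¹ • (t • R - T)).PosSemidef := (le_iff.mp hhi).smul (by positivity)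
  have hQ : ((2 * t)⁻¹ • (t • R + T)).PosSemidef := by
    refine PosSemidef.smul ?_ (by positivity)
    simpa [add_comm] using le_iff.mp hlo
  have hPQ : (2 * t)⁻¹ • (t • R - T) + (2 * t)⁻¹ • (t • R + T) = R := by
    rw [← smul_add, sub_add_add_cancel, ← two_smul ℝ, smul_smul, smul_smul,
      show (2 * t)⁻¹ * 2 * t = 1 by field_simp, one_smul]
  have hpar := hP.mul_inv_add_mul hQ (by rwa [hPQ])
  simp only [hPQ, smul_mul_assoc, mul_smul_comm, smul_smul, Matrix.mul_assoc] at hpar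
  rw [← Matrix.mul_assoc, hexp] at hpar
  have hscale : t ^ 2 • R - T * R⁻¹ * T =
      (2 * t) ^ 2 • (((2 * t)⁻¹ * (2 * t)⁻¹) • (t ^ 2 • R - T * R⁻¹ * T)) := by
    rw [smul_smul, show (2 * t) ^ 2 * ((2 * t)⁻¹ * (2 * t)⁻¹) = 1 by field_simp, one_smul]
  rw [le_iff, hscale]
  exact hpar.smul (sq_nonneg _)

end Loewner

section RealImaginaryPart

variable {ι : Type*} [Fintype ι]

theorem star_dotProduct_conjTranspose_mulVec (A : Matrix ι ι ℂ) (x : ι → ℂ) :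
    star x ⬝ᵥ Aᴴ *ᵥ x = star (star x ⬝ᵥ A *ᵥ x) := by
  rw [← star_dotProduct (A *ᵥ x) x, star_mulVec, ← dotProduct_mulVec]

theorem star_smul_dotProduct_mulVec_smul (B : Matrix ι ι ℂ) (x : ι → ℂ) (c : ℝ) :
    star (c • x) ⬝ᵥ B *ᵥ (c • x) = c ^ 2 • (star x ⬝ᵥ B *ᵥ x) := by
  rw [star_smul, star_trivial, mulVec_smul, dotProduct_smul, smul_dotProduct, smul_smul, sq]

theorem star_dotProduct_realPart_mulVec (A : Matrix ι ι ℂ) (x : ι → ℂ) :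
    star x ⬝ᵥ (ℜ A : Matrix ι ι ℂ) *ᵥ x = ((star x ⬝ᵥ A *ᵥ x).re : ℂ) := by
  rw [realPart_apply_coe, smul_mulVec, dotProduct_smul, add_mulVec, dotProduct_add,
    star_eq_conjTranspose, star_dotProduct_conjTranspose_mulVec, Complex.star_def,
    Complex.add_conj]
  simp

theorem star_dotProduct_imaginaryPart_mulVec (A : Matrix ι ι ℂ) (x : ι → ℂ) :
    star x ⬝ᵥ (ℑ A : Matrix ι ι ℂ) *ᵥ x = ((star x ⬝ᵥ A *ᵥ x).im : ℂ) := by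
  rw [imaginaryPart_apply_coe, smul_mulVec, smul_mulVec, dotProduct_smul, dotProduct_smul,
    sub_mulVec, dotProduct_sub, star_eq_conjTranspose, star_dotProduct_conjTranspose_mulVec,
    Complex.star_def, Complex.sub_conj, smul_eq_mul, Complex.real_smul]
  push_cast
  linear_combination (-(star x ⬝ᵥ A *ᵥ x).im : ℂ) * Complex.I_sq

variable [DecidableEq ι] {A : Matrix ι ι ℂ}

theorem isUnit_det_of_posDef_realPart (hR : (ℜ A : Matrix ι ι ℂ).PosDef) : IsUnit A.det := by
  rw [isUnit_iff_ne_zero]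
  intro hdet
  obtain ⟨v, hv, hAv⟩ := exists_mulVec_eq_zero_iff.mpr hdet
  have hpos := hR.dotProduct_mulVec_pos hv
  simp [star_dotProduct_realPart_mulVec, hAv] at hpos

theorem conjTranspose_inv_mul_realPart_mul_inv (hA : IsUnit A.det) :
    (A⁻¹)ᴴ * (ℜ A : Matrix ι ι ℂ) * A⁻¹ = ℜ A⁻¹ := by
  have hAH : IsUnit Aᴴ.det := by rw [det_conjTranspose]; exact hA.star
  rw [realPart_apply_coe, realPart_apply_coe, mul_smul_comm, smul_mul_assoc, mul_add, add_mul,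
    star_eq_conjTranspose, star_eq_conjTranspose, conjTranspose_nonsing_inv,
    mul_nonsing_inv_cancel_right _ _ hA, nonsing_inv_mul _ hAH, one_mul, add_comm]

theorem posSemidef_realPart_inv (hR : (ℜ A : Matrix ι ι ℂ).PosDef) :
    (ℜ A⁻¹ : Matrix ι ι ℂ).PosSemidef := by
  rw [← conjTranspose_inv_mul_realPart_mul_inv (isUnit_det_of_posDef_realPart hR)]
  exact hR.posSemidef.conjTranspose_mul_mul_same _

theorem conjTranspose_mul_inv_realPart_mul (hR : IsUnit (ℜ A : Matrix ι ι ℂ).det) :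
    Aᴴ * (ℜ A : Matrix ι ι ℂ)⁻¹ * A =
      ℜ A + (ℑ A : Matrix ι ι ℂ) * (ℜ A : Matrix ι ι ℂ)⁻¹ * ℑ A := by
  set R : Matrix ι ι ℂ := ↑(ℜ A)
  set T : Matrix ι ι ℂ := ↑(ℑ A)
  have hdecomp : A = R + Complex.I • T := (realPart_add_I_smul_imaginaryPart A).symm
  have hstar : Aᴴ = R - Complex.I • T := by
    have hRH : Rᴴ = R := (ℜ A).2.star_eq
    have hTH : Tᴴ = T := (ℑ A).2.star_eq
    rw [hdecomp, conjTranspose_add, conjTranspose_smul, hRH, hTH, Complex.star_def,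
      Complex.conj_I, neg_smul, sub_eq_add_neg]
  rw [hstar, hdecomp]
  simp only [sub_mul, mul_add, smul_mul_assoc, mul_smul_comm, Matrix.mul_assoc,
    mul_nonsing_inv_cancel_left _ _ hR, nonsing_inv_mul _ hR, Matrix.mul_one]
  rw [smul_sub, smul_smul, Complex.I_mul_I]
  module

end RealImaginaryPart

end Matrix

theorem matRe_eq_realPart {n : ℕ} (A : Matrix (Fin n) (Fin n) ℂ) : matRe A = ℜ A := by
  ext i j
  simp [matRe, realPart_apply_coe, mul_add]

theorem one_le_kant {x : ℝ} (hx : 0 < x) : 1 ≤ kant x := by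
  rw [kant, le_div_iff₀ (by positivity)]
  nlinarith [sq_nonneg (x - 1)]

namespace InSector

variable {n : ℕ} {α : ℝ} {A : Matrix (Fin n) (Fin n) ℂ}

theorem abs_im_le (hA : InSector α A) (x : Fin n → ℂ) :
    |(star x ⬝ᵥ A *ᵥ x).im| ≤ Real.tan α * (star x ⬝ᵥ A *ᵥ x).re := by
  rcases eq_or_ne x 0 with rfl | hx
  · simp
  have hpos : 0 < star x ⬝ᵥ x := dotProduct_star_self_pos_iff.mpr hx
  have hxx : star x ⬝ᵥ x = ((star x ⬝ᵥ x).re : ℂ) :=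
    Complex.eq_re_of_ofReal_le (r := 0) (by exact_mod_cast hpos.le)
  have hr : 0 < (star x ⬝ᵥ x).re := (Complex.lt_def.mp hpos).1
  set c := (√(star x ⬝ᵥ x).re)⁻¹
  have hc : 0 < c ^ 2 := by positivity
  have hunit : star (c • x) ⬝ᵥ c • x = 1 := by
    have h := star_smul_dotProduct_mulVec_smul 1 x c
    rw [one_mulVec, one_mulVec, hxx, Complex.real_smul, ← Complex.ofReal_mul, inv_pow,
      Real.sq_sqrt hr.le, inv_mul_cancel₀ hr.ne'] at h
    exact_mod_cast h
  have h := (hA _ hunit).2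
  rw [star_smul_dotProduct_mulVec_smul, Complex.smul_re, Complex.smul_im, smul_eq_mul,
    smul_eq_mul, abs_mul, abs_of_pos hc] at h
  nlinarith

theorem imaginaryPart_le (hA : InSector α A) :
    (ℑ A : Matrix (Fin n) (Fin n) ℂ) ≤ Real.tan α • (ℜ A : Matrix (Fin n) (Fin n) ℂ) := by
  refine PosSemidef.of_dotProduct_mulVec_nonneg
    (((IsSelfAdjoint.all _).smul (ℜ A).2).sub (ℑ A).2) fun x => ?_
  rw [sub_mulVec, dotProduct_sub, smul_mulVec, dotProduct_smul,
    star_dotProduct_realPart_mulVec, star_dotProduct_imaginaryPart_mulVec, Complex.real_smul,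
    ← Complex.ofReal_mul, ← Complex.ofReal_sub, Complex.zero_le_real, sub_nonneg]
  exact (abs_le.mp (hA.abs_im_le x)).2

theorem neg_le_imaginaryPart (hA : InSector α A) :
    -(Real.tan α • (ℜ A : Matrix (Fin n) (Fin n) ℂ)) ≤ ℑ A := by
  refine PosSemidef.of_dotProduct_mulVec_nonneg
    ((ℑ A).2.sub ((IsSelfAdjoint.all _).smul (ℜ A).2).neg) fun x => ?_
  rw [sub_neg_eq_add, add_mulVec, dotProduct_add, smul_mulVec, dotProduct_smul,
    star_dotProduct_realPart_mulVec, star_dotProduct_imaginaryPart_mulVec, Complex.real_smul,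
    ← Complex.ofReal_mul, ← Complex.ofReal_add, Complex.zero_le_real]
  linarith [(abs_le.mp (hA.abs_im_le x)).1]

theorem inv_realPart_le (hA : InSector α A) (hR : (ℜ A : Matrix (Fin n) (Fin n) ℂ).PosDef)
    (htan : 0 ≤ Real.tan α) :
    (ℜ A : Matrix (Fin n) (Fin n) ℂ)⁻¹ ≤
      (1 + Real.tan α ^ 2) • (ℜ A⁻¹ : Matrix (Fin n) (Fin n) ℂ) := by
  set R : Matrix (Fin n) (Fin n) ℂ := ↑(ℜ A)
  have hAdet : IsUnit A.det := isUnit_det_of_posDef_realPart hR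
  have hRdet : IsUnit R.det := (isUnit_iff_isUnit_det R).mp hR.isUnit
  have hcongr : Aᴴ * R⁻¹ * A ≤ (1 + Real.tan α ^ 2) • R := by
    rw [conjTranspose_mul_inv_realPart_mul hRdet, add_smul, one_smul]
    gcongr
    exact mul_inv_mul_le_sq_smul hR htan hA.neg_le_imaginaryPart hA.imaginaryPart_le
  have hcancel : (A⁻¹)ᴴ * (Aᴴ * R⁻¹ * A) * A⁻¹ = R⁻¹ := by
    rw [conjTranspose_nonsing_inv, Matrix.mul_assoc, Matrix.mul_assoc, mul_nonsing_inv _ hAdet,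
      Matrix.mul_one, ← Matrix.mul_assoc,
      nonsing_inv_mul _ (by rwa [det_conjTranspose, isUnit_star]), Matrix.one_mul]
  have h := star_left_conjugate_le_conjugate hcongr A⁻¹
  rwa [star_eq_conjTranspose, hcancel, mul_smul_comm, smul_mul_assoc,
    conjTranspose_inv_mul_realPart_mul_inv hAdet] at h

end InSector

theorem stmt13_general {n l : ℕ} {α : ℝ} (hα : α ∈ Set.Ico 0 (Real.pi / 2))
    {A : Matrix (Fin n) (Fin n) ℂ} (hA : InSector α A)
    {m M : ℝ} (hm : 0 < m) (hmM : m ≤ M)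
    (h1 : (matRe A - m • 1).PosSemidef)
    (Φ : Matrix (Fin n) (Fin n) ℂ →ₗ[ℂ] Matrix (Fin l) (Fin l) ℂ)
    (hΦpos : ∀ X : Matrix (Fin n) (Fin n) ℂ, X.PosSemidef → (Φ X).PosSemidef) :
    (((Real.cos α)⁻¹ ^ 2 * Real.sqrt (kant (M / m))) • Φ (matRe A⁻¹) -
      Φ ((matRe A)⁻¹)).PosSemidef := by
  obtain ⟨hα0, hαπ⟩ := hα
  have hcos : Real.cos α ≠ 0 :=
    (Real.cos_pos_of_mem_Ioo ⟨by linarith [Real.pi_pos], hαπ⟩).ne'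
  have hsec : (Real.cos α)⁻¹ ^ 2 = 1 + Real.tan α ^ 2 := by
    rw [inv_pow, ← Real.inv_one_add_tan_sq hcos, inv_inv]
  have hK : 1 ≤ √(kant (M / m)) :=
    Real.one_le_sqrt.mpr (one_le_kant (div_pos (hm.trans_le hmM) hm))
  have hR : (ℜ A : Matrix (Fin n) (Fin n) ℂ).PosDef := by
    rw [← matRe_eq_realPart, ← add_sub_cancel (m • 1) (matRe A)]
    exact (PosDef.one.smul hm).add_posSemidef h1
  have hΦmono : Monotone Φ := fun X Y hXY => by
    rw [le_iff, ← map_sub]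
    exact hΦpos _ hXY
  rw [matRe_eq_realPart, matRe_eq_realPart, ← le_iff, hsec]
  calc Φ (ℜ A : Matrix (Fin n) (Fin n) ℂ)⁻¹
      ≤ Φ ((1 + Real.tan α ^ 2) • (ℜ A⁻¹ : Matrix (Fin n) (Fin n) ℂ)) :=
        hΦmono (hA.inv_realPart_le hR (Real.tan_nonneg_of_nonneg_of_le_pi_div_two hα0 hαπ.le))
    _ = (1 + Real.tan α ^ 2) • Φ (ℜ A⁻¹) := LinearMap.map_smul_of_tower _ _ _
    _ ≤ ((1 + Real.tan α ^ 2) * √(kant (M / m))) • Φ (ℜ A⁻¹) :=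
        smul_le_smul_of_nonneg_right (le_mul_of_one_le_right (by positivity) hK)
          (hΦpos _ (posSemidef_realPart_inv hR)).nonneg

/-- For a sector matrix `A` of angle `α ∈ [0, π/2)` with `0 < m·I ≤ Re A ≤ M·I`, `h = M/m`,
and every normalized positive linear map `Φ`,
`Φ((Re A)⁻¹) ≤ sec²(α)K(h)^{1/2}Φ(Re(A⁻¹))` in the Loewner order. -/
theorem stmt13 {n l : ℕ} {α : ℝ} (hα : α ∈ Set.Ico 0 (Real.pi / 2))
    {A : Matrix (Fin n) (Fin n) ℂ} (hA : InSector α A)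
    {m M : ℝ} (hm : 0 < m) (hmM : m ≤ M)
    (h1 : (matRe A - m • 1).PosSemidef)
    (h2 : (M • (1 : Matrix (Fin n) (Fin n) ℂ) - matRe A).PosSemidef)
    (Φ : Matrix (Fin n) (Fin n) ℂ →ₗ[ℂ] Matrix (Fin l) (Fin l) ℂ)
    (hΦpos : ∀ X : Matrix (Fin n) (Fin n) ℂ, X.PosSemidef → (Φ X).PosSemidef)
    (hΦ1 : Φ 1 = 1) :
    (((Real.cos α)⁻¹ ^ 2 * Real.sqrt (kant (M / m))) • Φ (matRe A⁻¹) -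
      Φ ((matRe A)⁻¹)).PosSemidef :=
  stmt13_general hα hA hm hmM h1 Φ hΦpos
end

section
/- Let A_1, …, A_k ∈ M_n(ℂ) be accretive matrices with 0 < m·I_n ≤ Re(A_i) ≤ M·I_n for all i, where 0 < m ≤ M. Then for every normalized positive multilinear map Φ : M_n(ℂ)^k → M_l(ℂ), one has M^k·m^k·Φ(Re(A_1^{-1}), …, Re(A_k^{-1})) + Φ(Re A_1, …, Re A_k) ≤ (M^k + m^k)·I_l in the Loewner order. -/
open Matrix
open scoped ComplexOrder

/-!
For a single accretive `A` with `H = Re A`, one has `Re (A⁻¹) ≤ H⁻¹`, because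
`A H⁻¹ Aᴴ - H = (A - H) H⁻¹ (A - H)ᴴ ≥ 0`, and `Mm H⁻¹ + H ≤ (M + m) I`, because
`(M - H) H⁻¹ (H - m)` is a product of commuting positive matrices. Hence
`Mm Re (Aᵢ⁻¹) ≤ Dᵢ := (M + m) I - Re Aᵢ`, and monotonicity of `Φ` on positive arguments gives
`M^k m^k Φ(Re A⁻¹) ≤ Φ(D)`. It remains to bound `Φ(Re A) + Φ(D)`: write
`Re Aᵢ = m Pᵢ + M Qᵢ` with `Pᵢ, Qᵢ ≥ 0`, `Pᵢ + Qᵢ = I`, so that `Dᵢ = M Pᵢ + m Qᵢ`; expanding by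
multilinearity over subsets `s` of the indices, each term `Φ(s.piecewise P Q)` has coefficient
`m^a M^b + M^a m^b ≤ M^k + m^k` (`a + b = k`) on the left and `M^k + m^k` in `(M^k + m^k) Φ(I)`.
-/

open Finset

namespace MultilinearMap

variable {R ι E F : Type*} [Fintype ι] [DecidableEq ι]

section Semiring

variable [CommSemiring R] [AddCommMonoid E] [Module R E] [AddCommMonoid F] [Module R F]

theorem map_smul_add_smul_univ (Φ : MultilinearMap R (fun _ : ι => E) F) (a b : R)
    (P Q : ι → E) :
    Φ (fun i => a • P i + b • Q i) = ∑ s, (a ^ #s * b ^ #sᶜ) • Φ (s.piecewise P Q) := by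
  rw [show (fun i => a • P i + b • Q i) = (fun i => a • P i) + (fun i => b • Q i) from rfl,
    Φ.map_add_univ]
  refine sum_congr rfl fun s _ => ?_
  have : s.piecewise (fun i => a • P i) (fun i => b • Q i)
      = fun i => s.piecewise (fun _ => a) (fun _ => b) i • s.piecewise P Q i := by
    ext i; by_cases h : i ∈ s <;> simp [h]
  rw [this, Φ.map_smul_univ, prod_piecewise, prod_const, prod_const, univ_inter,
    compl_eq_univ_sdiff]

end Semiring

section Ordered

variable [CommRing R] [AddCommGroup E] [PartialOrder E] [Module R E]
  [AddCommGroup F] [PartialOrder F] [IsOrderedAddMonoid F] [Module R F]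
  {Φ : MultilinearMap R (fun _ : ι => E) F}

theorem map_le_map_of_nonneg [IsOrderedAddMonoid E] (hΦ : ∀ X, (∀ i, 0 ≤ X i) → 0 ≤ Φ X)
    {X Y : ι → E} (hX : ∀ i, 0 ≤ X i) (hXY : ∀ i, X i ≤ Y i) : Φ X ≤ Φ Y := by
  have hterm (s : Finset ι) : 0 ≤ Φ (s.piecewise X (Y - X)) :=
    hΦ _ (s.le_piecewise_of_le_of_le (h := 0) hX fun i => sub_nonneg.2 (hXY i))
  calc Φ X = Φ (univ.piecewise X (Y - X)) := by rw [piecewise_univ]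
    _ ≤ ∑ s : Finset ι, Φ (s.piecewise X (Y - X)) :=
        single_le_sum (fun s _ => hterm s) (mem_univ _)
    _ = Φ Y := by rw [← Φ.map_add_univ, add_sub_cancel]

variable [LinearOrder R] [IsStrictOrderedRing R] [PosSMulMono R F]

theorem map_add_map_le (hΦ : ∀ X, (∀ i, 0 ≤ X i) → 0 ≤ Φ X) {m M : R} (hm : 0 ≤ m)
    (hmM : m ≤ M) {P Q : ι → E} (hP : ∀ i, 0 ≤ P i) (hQ : ∀ i, 0 ≤ Q i) :
    Φ (fun i => m • P i + M • Q i) + Φ (fun i => M • P i + m • Q i)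
      ≤ (M ^ Fintype.card ι + m ^ Fintype.card ι) • Φ (P + Q) := by
  have hPQ : P + Q = fun i => (1 : R) • P i + (1 : R) • Q i := by ext; simp
  rw [hPQ, map_smul_add_smul_univ, map_smul_add_smul_univ, map_smul_add_smul_univ, smul_sum,
    ← sum_add_distrib]
  refine sum_le_sum fun s _ => ?_
  have hcard : #s + #sᶜ = Fintype.card ι := card_add_card_compl s
  have hcoeff :
      m ^ #s * M ^ #sᶜ + M ^ #s * m ^ #sᶜ ≤ M ^ Fintype.card ι + m ^ Fintype.card ι := by
    rw [← hcard, pow_add, pow_add]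
    linarith [mul_add_mul_le_mul_add_mul (pow_le_pow_left₀ hm hmM #s)
      (pow_le_pow_left₀ hm hmM #sᶜ)]
  have hnonneg : 0 ≤ Φ (s.piecewise P Q) := hΦ _ (s.le_piecewise_of_le_of_le (h := 0) hP hQ)
  simpa [← add_smul] using smul_le_smul_of_nonneg_right hcoeff hnonneg

end Ordered

end MultilinearMap

open scoped MatrixOrder

theorem exists_nonneg_smul_add_smul_eq {𝕜 E : Type*} [Field 𝕜] [LinearOrder 𝕜]
    [IsStrictOrderedRing 𝕜] [AddCommGroup E] [PartialOrder E] [IsOrderedAddMonoid E]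
    [Module 𝕜 E] [PosSMulMono 𝕜 E] {u b : E} {m M : 𝕜} (hu : 0 ≤ u) (hmM : m ≤ M)
    (hm : m • u ≤ b) (hM : b ≤ M • u) :
    ∃ p q : E, 0 ≤ p ∧ 0 ≤ q ∧ p + q = u ∧ b = m • p + M • q := by
  rcases hmM.lt_or_eq with hlt | rfl
  · have hMm : M - m ≠ 0 := sub_ne_zero.2 hlt.ne'
    refine ⟨(M - m)⁻¹ • (M • u - b), (M - m)⁻¹ • (b - m • u),
      smul_nonneg (inv_nonneg.2 (sub_nonneg.2 hmM)) (sub_nonneg.2 hM),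
      smul_nonneg (inv_nonneg.2 (sub_nonneg.2 hmM)) (sub_nonneg.2 hm), ?_, ?_⟩
    · match_scalars <;> field_simp <;> ring
    · match_scalars <;> field_simp <;> ring
  · exact ⟨u, 0, hu, le_rfl, add_zero u, by rw [le_antisymm hM hm, smul_zero, add_zero]⟩

theorem Matrix.PosDef.smul_inv_add_le {𝕜 ι : Type*} [RCLike 𝕜] [Fintype ι] [DecidableEq ι]
    {H : Matrix ι ι 𝕜} (hH : H.PosDef) {m M : ℝ} (hm : m • 1 ≤ H) (hM : H ≤ M • 1) :
    (M * m) • H⁻¹ + H ≤ (M + m) • 1 := by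
  have hdet : IsUnit H.det := isUnit_iff_isUnit_det H |>.mp hH.isUnit
  have hHH : H * H⁻¹ = 1 := mul_nonsing_inv H hdet
  have hHH' : H⁻¹ * H = 1 := nonsing_inv_mul H hdet
  have hcomm : Commute H H⁻¹ := hHH.trans hHH'.symm
  have hMH : Commute (M • 1 - H) H⁻¹ := ((Commute.one_left _).smul_left M).sub_left hcomm
  have hHm : Commute H⁻¹ (H - m • 1) := hcomm.symm.sub_right ((Commute.one_right _).smul_right m)
  have hMm : Commute (M • 1 - H) (H - m • 1) := ((Commute.one_left _).smul_left M).sub_left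
    ((Commute.refl H).sub_right ((Commute.one_right H).smul_right m))
  have hprod : 0 ≤ (M • 1 - H) * H⁻¹ * (H - m • 1) := by
    have hMH₀ := (commute_iff_mul_nonneg (sub_nonneg.2 hM) hH.inv.posSemidef.nonneg).mp hMH
    exact (commute_iff_mul_nonneg hMH₀ (sub_nonneg.2 hm)).mp (hMm.mul_left hHm)
  have hexpand : (M • 1 - H) * H⁻¹ * (H - m • 1) = (M + m) • 1 - ((M * m) • H⁻¹ + H) := by
    simp only [sub_mul, mul_sub, Matrix.smul_mul, Matrix.mul_smul, one_mul, mul_one, hHH, hHH']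
    module
  rwa [hexpand, sub_nonneg] at hprod

section matRe

variable {n : ℕ} {A : Matrix (Fin n) (Fin n) ℂ}

theorem matRe_isHermitian (A : Matrix (Fin n) (Fin n) ℂ) : (matRe A).IsHermitian := by
  simp [IsHermitian, matRe, add_comm]

theorem add_conjTranspose_eq_matRe_add_matRe (A : Matrix (Fin n) (Fin n) ℂ) :
    A + Aᴴ = matRe A + matRe A := by
  rw [matRe, ← add_smul]; norm_num

theorem isUnit_det_of_posDef_matRe (hA : (matRe A).PosDef) : IsUnit A.det := by
  rw [isUnit_iff_ne_zero]
  intro hdet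
  obtain ⟨v, hv, hAv⟩ := exists_mulVec_eq_zero_iff.mpr hdet
  have hv0 : star v ⬝ᵥ matRe A *ᵥ v = 0 := by
    rw [matRe, smul_mulVec, add_mulVec, hAv, zero_add, dotProduct_smul, dotProduct_mulVec,
      ← star_mulVec, hAv, star_zero, zero_dotProduct, smul_zero]
  exact (hA.dotProduct_mulVec_pos hv).ne' hv0

theorem matRe_inv (hA : (matRe A).PosDef) : matRe A⁻¹ = A⁻¹ * matRe A * A⁻¹ᴴ := by
  have hdet := isUnit_det_of_posDef_matRe hA
  have hdetH : IsUnit Aᴴ.det := by rw [det_conjTranspose]; exact hdet.star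
  rw [matRe, matRe, Matrix.mul_smul, Matrix.smul_mul, mul_add, add_mul, nonsing_inv_mul A hdet,
    conjTranspose_nonsing_inv, Matrix.mul_assoc, mul_nonsing_inv _ hdetH, one_mul, mul_one,
    add_comm]

theorem matRe_inv_nonneg (hA : (matRe A).PosDef) : 0 ≤ matRe A⁻¹ := by
  rw [matRe_inv hA, ← star_eq_conjTranspose]
  exact star_right_conjugate_nonneg hA.posSemidef.nonneg _

theorem matRe_le_mul_inv_matRe_mul_conjTranspose (hA : (matRe A).PosDef) :
    matRe A ≤ A * (matRe A)⁻¹ * Aᴴ := by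
  set H := matRe A
  have hdet : IsUnit H.det := isUnit_iff_isUnit_det H |>.mp hA.isUnit
  have hsum : A + Aᴴ = H + H := add_conjTranspose_eq_matRe_add_matRe A
  have hHerm : Hᴴ = H := matRe_isHermitian A
  have key : A * H⁻¹ * Aᴴ = H + (A - H) * H⁻¹ * (A - H)ᴴ := by
    rw [conjTranspose_sub, hHerm]
    simp only [sub_mul, mul_sub, Matrix.mul_assoc, nonsing_inv_mul H hdet, mul_one]
    rw [← Matrix.mul_assoc H, mul_nonsing_inv H hdet, one_mul]
    calc A * (H⁻¹ * Aᴴ) = H + (A * (H⁻¹ * Aᴴ) - (A + Aᴴ) + H) := by rw [hsum]; abel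
      _ = _ := by abel
  rw [key, ← star_eq_conjTranspose]
  exact le_add_of_nonneg_right (star_right_conjugate_nonneg hA.inv.posSemidef.nonneg _)

theorem matRe_inv_le_inv_matRe (hA : (matRe A).PosDef) : matRe A⁻¹ ≤ (matRe A)⁻¹ := by
  have hdet := isUnit_det_of_posDef_matRe hA
  have hdetH : IsUnit Aᴴ.det := by rw [det_conjTranspose]; exact hdet.star
  have hinv : (matRe A)⁻¹ = A⁻¹ * (A * (matRe A)⁻¹ * Aᴴ) * A⁻¹ᴴ := by
    rw [conjTranspose_nonsing_inv, ← Matrix.mul_assoc, ← Matrix.mul_assoc,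
      nonsing_inv_mul A hdet, one_mul, Matrix.mul_assoc, mul_nonsing_inv _ hdetH, mul_one]
  rw [matRe_inv hA, hinv, ← star_eq_conjTranspose]
  exact star_right_conjugate_le_conjugate (matRe_le_mul_inv_matRe_mul_conjTranspose hA) _

theorem smul_matRe_inv_le (hA : (matRe A).PosDef) {m M : ℝ} (hm : 0 ≤ m) (hmM : m ≤ M)
    (h1 : m • 1 ≤ matRe A) (h2 : matRe A ≤ M • 1) :
    (M * m) • matRe A⁻¹ ≤ (M + m) • 1 - matRe A :=
  calc (M * m) • matRe A⁻¹ ≤ (M * m) • (matRe A)⁻¹ :=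
        smul_le_smul_of_nonneg_left (matRe_inv_le_inv_matRe hA) (mul_nonneg (hm.trans hmM) hm)
    _ ≤ (M + m) • 1 - matRe A := le_sub_iff_add_le.2 (hA.smul_inv_add_le h1 h2)

end matRe

/-- For accretive matrices `A₁, …, A_k` with `0 < m·I ≤ Re(Aᵢ) ≤ M·I` and every normalized
positive multilinear map `Φ`,
`M^k m^k Φ(Re(A₁⁻¹), …, Re(A_k⁻¹)) + Φ(Re A₁, …, Re A_k) ≤ (M^k + m^k)·I`. -/
theorem stmt17 {n l k : ℕ} {A : Fin k → Matrix (Fin n) (Fin n) ℂ}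
    (hacc : ∀ i, (matRe (A i)).PosDef)
    {m M : ℝ} (hm : 0 < m) (hmM : m ≤ M)
    (h1 : ∀ i, (matRe (A i) - m • 1).PosSemidef)
    (h2 : ∀ i, (M • (1 : Matrix (Fin n) (Fin n) ℂ) - matRe (A i)).PosSemidef)
    (Φ : MultilinearMap ℂ (fun _ : Fin k => Matrix (Fin n) (Fin n) ℂ)
      (Matrix (Fin l) (Fin l) ℂ))
    (hΦpos : ∀ X : Fin k → Matrix (Fin n) (Fin n) ℂ,
      (∀ i, (X i).PosSemidef) → (Φ X).PosSemidef)
    (hΦ1 : Φ (fun _ => 1) = 1) :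
    ((M ^ k + m ^ k) • (1 : Matrix (Fin l) (Fin l) ℂ) -
      ((M ^ k * m ^ k) • Φ (fun i => matRe ((A i)⁻¹)) +
        Φ (fun i => matRe (A i)))).PosSemidef := by
  set Ψ := Φ.restrictScalars ℝ
  have hΨ : ∀ X, (∀ i, 0 ≤ X i) → 0 ≤ Ψ X := fun X hX =>
    (hΦpos X fun i => (hX i).posSemidef).nonneg
  choose P Q hP hQ hPQ hB using fun i =>
    exists_nonneg_smul_add_smul_eq PosSemidef.one.nonneg hmM (le_iff.2 (h1 i)) (le_iff.2 (h2 i))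
  have hD (i : Fin k) : (M + m) • 1 - matRe (A i) = M • P i + m • Q i := by
    rw [← hPQ i, hB i]; module
  have hinv : (M ^ k * m ^ k) • Φ (fun i => matRe (A i)⁻¹) ≤ Φ (fun i => M • P i + m • Q i) :=
    calc (M ^ k * m ^ k) • Φ (fun i => matRe (A i)⁻¹)
        = Ψ (fun i => (M * m) • matRe (A i)⁻¹) := by
          rw [Ψ.map_smul_univ (fun _ => M * m), prod_const, card_univ, Fintype.card_fin, mul_pow]
          rfl
      _ ≤ Ψ (fun i => M • P i + m • Q i) :=
          Ψ.map_le_map_of_nonneg hΨ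
            (fun i => smul_nonneg (mul_nonneg (hm.le.trans hmM) hm.le) (matRe_inv_nonneg (hacc i)))
            fun i => hD i ▸ smul_matRe_inv_le (hacc i) hm.le hmM (le_iff.2 (h1 i)) (le_iff.2 (h2 i))
  have hsum : Φ (fun i => m • P i + M • Q i) + Φ (fun i => M • P i + m • Q i)
      ≤ (M ^ k + m ^ k) • 1 := by
    simpa [Ψ, hΦ1, show P + Q = fun _ => 1 from funext hPQ] using
      Ψ.map_add_map_le hΨ hm.le hmM hP hQ
  rw [← le_iff, show (fun i => matRe (A i)) = fun i => m • P i + M • Q i from funext hB]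
  calc (M ^ k * m ^ k) • Φ (fun i => matRe (A i)⁻¹) + Φ (fun i => m • P i + M • Q i)
      ≤ Φ (fun i => M • P i + m • Q i) + Φ (fun i => m • P i + M • Q i) := add_le_add_left hinv _
    _ ≤ (M ^ k + m ^ k) • 1 := (add_comm _ _).trans_le hsum
end
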